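/- arXiv:2008.10571 — 11 statements merged into one kernel-verified Lean document; each statement's English description precedes it below -/
import Mathlib

section
/- Let I ⊂ ℝ be an open interval, κ : I → ℝ a smooth function with κ(s) ≠ 0 for all s ∈ I, and c₁ ∈ ℝ a constant such that 5κ²(s)·κ''(s) − 2κ⁵(s) = c₁ on I. Then there exists a constant c₂ ∈ ℝ such that 5(κ'(s))² = c₂ − 2c₁/κ(s) + κ⁴(s) for all s ∈ I. -/
/-- If a smooth nonvanishing function `κ` on an open interval satisfies
`5κ²κ'' − 2κ⁵ = c₁`, then there is a constant `c₂` with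
`5(κ')² = c₂ − 2c₁/κ + κ⁴` on the interval. -/
theorem stmt_1 (a b : ℝ) (κ : ℝ → ℝ) (c₁ : ℝ)
    (hκ : ContDiffOn ℝ (⊤ : ℕ∞) κ (Set.Ioo a b))
    (hne : ∀ s ∈ Set.Ioo a b, κ s ≠ 0)
    (hfi : ∀ s ∈ Set.Ioo a b,
      5 * (κ s) ^ 2 * iteratedDeriv 2 κ s - 2 * (κ s) ^ 5 = c₁) :
    ∃ c₂ : ℝ, ∀ s ∈ Set.Ioo a b,
      5 * (deriv κ s) ^ 2 = c₂ - 2 * c₁ / κ s + (κ s) ^ 4 := by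
  set F : ℝ → ℝ := fun t => 5 * (deriv κ t) ^ 2 + 2 * c₁ / κ t - (κ t) ^ 4 with hF
  have hopen : IsOpen (Set.Ioo a b) := isOpen_Ioo
  have hκ' : ContDiffOn ℝ (⊤ : ℕ∞) (deriv κ) (Set.Ioo a b) := by
    exact hκ.deriv_of_isOpen hopen (m := (⊤ : ℕ∞)) (by simp)
  have hdκ : ∀ s ∈ Set.Ioo a b, HasDerivAt κ (deriv κ s) s := fun s hs =>
    ((hκ.differentiableOn (by simp)).differentiableAt (hopen.mem_nhds hs)).hasDerivAt
  have hdκ' : ∀ s ∈ Set.Ioo a b, HasDerivAt (deriv κ) (deriv (deriv κ) s) s := fun s hs =>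
    ((hκ'.differentiableOn (by simp)).differentiableAt (hopen.mem_nhds hs)).hasDerivAt
  have hFderiv : ∀ s ∈ Set.Ioo a b, HasDerivAt F 0 s := by
    intro s hs
    have h1 : HasDerivAt (fun t => 5 * (deriv κ t) ^ 2)
        (5 * (2 * deriv κ s * deriv (deriv κ) s)) s := by
      simpa using (((hdκ' s hs).pow 2).const_mul 5)
    have h2 : HasDerivAt (fun t => 2 * c₁ / κ t)
        (-(2 * c₁ * deriv κ s) / (κ s) ^ 2) s := by
      simpa [mul_comm, mul_assoc, mul_left_comm] using
        (hasDerivAt_const s (2 * c₁)).fun_div (hdκ s hs) (hne s hs)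
    have h3 : HasDerivAt (fun t => (κ t) ^ 4)
        (4 * (κ s) ^ 3 * deriv κ s) s := by
      simpa [mul_comm, mul_assoc, mul_left_comm] using ((hdκ s hs).fun_pow 4)
    have h := (h1.add h2).sub h3
    refine h.congr_deriv ?_
    have hc := hfi s hs
    have hκ2 : iteratedDeriv 2 κ s = deriv (deriv κ) s := by
      rw [iteratedDeriv_succ, iteratedDeriv_one]
    rw [hκ2] at hc
    have hk := hne s hs
    field_simp
    linear_combination (2 * deriv κ s) * hc
  -- constancy
  rcases Set.eq_empty_or_nonempty (Set.Ioo a b) with he | ⟨x₀, hx₀⟩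
  · exact ⟨0, fun s hs => absurd hs (by simp [he])⟩
  refine ⟨F x₀, fun s hs => ?_⟩
  have key : F s = F x₀ := by
    rcases le_total x₀ s with h | h
    · have hsub : Set.Icc x₀ s ⊆ Set.Ioo a b := fun t ht =>
        ⟨lt_of_lt_of_le hx₀.1 ht.1, lt_of_le_of_lt ht.2 hs.2⟩
      have := constant_of_has_deriv_right_zero (f := F) (a := x₀) (b := s)
        (fun t ht => ((hFderiv t (hsub ht)).continuousAt.continuousWithinAt))
        (fun t ht => ((hFderiv t (hsub (Set.Ico_subset_Icc_self ht))).hasDerivWithinAt))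
      exact this s (Set.right_mem_Icc.2 h)
    · have hsub : Set.Icc s x₀ ⊆ Set.Ioo a b := fun t ht =>
        ⟨lt_of_lt_of_le hs.1 ht.1, lt_of_le_of_lt ht.2 hx₀.2⟩
      have := constant_of_has_deriv_right_zero (f := F) (a := s) (b := x₀)
        (fun t ht => ((hFderiv t (hsub ht)).continuousAt.continuousWithinAt))
        (fun t ht => ((hFderiv t (hsub (Set.Ico_subset_Icc_self ht))).hasDerivWithinAt))
      exact (this x₀ (Set.right_mem_Icc.2 h)).symm
  have : 5 * (deriv κ s) ^ 2 + 2 * c₁ / κ s - (κ s) ^ 4 = F x₀ := key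
  linarith [this]
end

section
/- The function κ : (0,∞) → ℝ defined by κ(s) = √5/s satisfies the ODE κ·κ''' + 2κ'·κ'' − 2κ³·κ' = 0 on (0,∞), satisfies 5(κ'(s))² = κ⁴(s) for all s > 0, and moreover κ''(s) − 2κ³(s) = −8√5/s³, which is nonzero for every s > 0. -/
/-!
For `κ = c / s` every derivative is a monomial, `κ⁽ᵏ⁾ = (-1)ᵏ k! c / s^(k+1)`, so each expression
in the statement is a constant multiple of a power of `1/s`. The tangential residual is
`2c²(c² - 5)/s⁵` and `5κ'² - κ⁴ = c²(5 - c²)/s⁴`, both of which vanish exactly for `c² = 5`,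
while `κ'' - 2κ³ = 2c(1 - c²)/s³` does not.
-/

open Nat

section
variable {𝕜 : Type*} [NontriviallyNormedField 𝕜]

theorem iteratedDeriv_const_div (c x : 𝕜) (k : ℕ) :
    iteratedDeriv k (fun s => c / s) x = (-1) ^ k * k ! * c / x ^ (k + 1) := by
  simp only [div_eq_mul_inv c, iteratedDeriv_const_mul_field, iteratedDeriv_eq_iterate]
  have hpow : x ^ (-1 - k : ℤ) = (x ^ (k + 1))⁻¹ := by
    rw [← zpow_natCast, ← zpow_neg]; push_cast; ring_nf
  rw [iter_deriv_inv, hpow]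
  ring

theorem deriv_const_div_apply (c x : 𝕜) : deriv (fun s => c / s) x = -c / x ^ 2 := by
  rw [← iteratedDeriv_one, iteratedDeriv_const_div]; norm_num

theorem iteratedDeriv_two_const_div (c x : 𝕜) :
    iteratedDeriv 2 (fun s => c / s) x = 2 * c / x ^ 3 := by
  rw [iteratedDeriv_const_div]; norm_num

theorem iteratedDeriv_three_const_div (c x : 𝕜) :
    iteratedDeriv 3 (fun s => c / s) x = -6 * c / x ^ 4 := by
  rw [iteratedDeriv_const_div]; norm_num

theorem const_div_triharmonic_tangential (c x : 𝕜) (hx : x ≠ 0) :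
    c / x * iteratedDeriv 3 (fun s => c / s) x
        + 2 * deriv (fun s => c / s) x * iteratedDeriv 2 (fun s => c / s) x
        - 2 * (c / x) ^ 3 * deriv (fun s => c / s) x = 2 * c ^ 2 * (c ^ 2 - 5) / x ^ 5 := by
  rw [deriv_const_div_apply, iteratedDeriv_two_const_div, iteratedDeriv_three_const_div]
  field_simp
  ring

theorem const_div_five_mul_deriv_sq_sub_pow_four (c x : 𝕜) (hx : x ≠ 0) :
    5 * deriv (fun s => c / s) x ^ 2 - (c / x) ^ 4 = c ^ 2 * (5 - c ^ 2) / x ^ 4 := by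
  rw [deriv_const_div_apply]
  field_simp

theorem const_div_iteratedDeriv_two_sub_two_mul_pow_three (c x : 𝕜) (hx : x ≠ 0) :
    iteratedDeriv 2 (fun s => c / s) x - 2 * (c / x) ^ 3 = 2 * c * (1 - c ^ 2) / x ^ 3 := by
  rw [iteratedDeriv_two_const_div]
  field_simp

end

/-- The function `κ(s) = √5/s` on `(0,∞)` satisfies the ODE
`κκ''' + 2κ'κ'' − 2κ³κ' = 0`, its doubly integrated form `5(κ')² = κ⁴`,
and `κ'' − 2κ³ = −8√5/s³ ≠ 0`. -/
theorem stmt_2 (κ : ℝ → ℝ) (hκ : κ = fun s => Real.sqrt 5 / s) :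
    ∀ s : ℝ, 0 < s →
      (κ s * iteratedDeriv 3 κ s + 2 * deriv κ s * iteratedDeriv 2 κ s
          - 2 * (κ s) ^ 3 * deriv κ s = 0) ∧
      (5 * (deriv κ s) ^ 2 = (κ s) ^ 4) ∧
      (iteratedDeriv 2 κ s - 2 * (κ s) ^ 3 = -8 * Real.sqrt 5 / s ^ 3) ∧
      (iteratedDeriv 2 κ s - 2 * (κ s) ^ 3 ≠ 0) := by
  subst hκ
  intro s hs
  have h5 : √5 ^ 2 = 5 := Real.sq_sqrt (by norm_num)
  have hcurv : iteratedDeriv 2 (fun s => √5 / s) s - 2 * (√5 / s) ^ 3 = -8 * √5 / s ^ 3 := by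
    rw [const_div_iteratedDeriv_two_sub_two_mul_pow_three _ _ hs.ne', h5]
    ring
  refine ⟨?_, ?_, hcurv, ?_⟩
  · rw [const_div_triharmonic_tangential _ _ hs.ne', h5]
    ring
  · rw [← sub_eq_zero, const_div_five_mul_deriv_sq_sub_pow_four _ _ hs.ne', h5]
    ring
  · rw [hcurv]
    have hsqrt5 : 0 < √5 := by positivity
    exact (div_neg_of_neg_of_pos (by linarith) (by positivity)).ne
end

section
/- Let I ⊂ ℝ be a nonempty open interval, K ∈ ℝ a constant, and κ : I → ℝ a smooth function with κ(s) > 0 for all s ∈ I. Suppose κ satisfies both equations κ·κ''' + 2κ'·κ'' − 2κ³·κ' = 0 and κ⁽⁴⁾ − 15κ(κ')² − 10κ²κ'' + κ⁵ + K(κ'' − 2κ³) = 0 on I. Then κ is constant on I, its constant value κ₀ satisfies κ₀² = 2K, and in particular K > 0. -/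
open scoped ContDiff

lemma my_const {f : ℝ → ℝ} {s : Set ℝ} (hconv : Convex ℝ s) (hso : IsOpen s)
    (h : ∀ x ∈ s, HasDerivAt f 0 x) {x y : ℝ} (hx : x ∈ s) (hy : y ∈ s) : f x = f y :=
  hconv.is_const_of_fderivWithin_eq_zero
    (fun z hz => ((h z hz).differentiableAt).differentiableWithinAt)
    (fun z hz => by
      rw [fderivWithin_of_isOpen hso hz, ((h z hz).hasFDerivAt).fderiv]
      exact ContinuousLinearMap.ext fun t => by simp) hx hy

/-- A smooth positive solution on a nonempty open interval of both the tangential and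
normal equations for triharmonic curves in a surface of constant Gaussian curvature `K`
is constant, its value `κ₀` satisfies `κ₀² = 2K`, and in particular `K > 0`. -/
theorem stmt_4 (a b : ℝ) (hab : a < b) (K : ℝ) (κ : ℝ → ℝ)
    (hκ : ContDiffOn ℝ (⊤ : ℕ∞) κ (Set.Ioo a b))
    (hpos : ∀ s ∈ Set.Ioo a b, 0 < κ s)
    (heq1 : ∀ s ∈ Set.Ioo a b,
      κ s * iteratedDeriv 3 κ s + 2 * deriv κ s * iteratedDeriv 2 κ s
        - 2 * (κ s) ^ 3 * deriv κ s = 0)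
    (heq2 : ∀ s ∈ Set.Ioo a b,
      iteratedDeriv 4 κ s - 15 * κ s * (deriv κ s) ^ 2
        - 10 * (κ s) ^ 2 * iteratedDeriv 2 κ s + (κ s) ^ 5
        + K * (iteratedDeriv 2 κ s - 2 * (κ s) ^ 3) = 0) :
    ∃ κ₀ : ℝ, (∀ s ∈ Set.Ioo a b, κ s = κ₀) ∧ κ₀ ^ 2 = 2 * K ∧ 0 < K := by
  have hI : IsOpen (Set.Ioo a b) := isOpen_Ioo
  have hconv : Convex ℝ (Set.Ioo a b) := convex_Ioo a b
  have hs₀ : (a + b) / 2 ∈ Set.Ioo a b := ⟨by linarith, by linarith⟩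
  set s₀ : ℝ := (a + b) / 2 with hs₀def
  set κ₁ := deriv κ with hκ₁def
  set κ₂ := deriv κ₁ with hκ₂def
  set κ₃ := deriv κ₂ with hκ₃def
  set κ₄ := deriv κ₃ with hκ₄def
  have hit2 : iteratedDeriv 2 κ = κ₂ := by
    rw [hκ₂def, hκ₁def, show (2 : ℕ) = 1 + 1 from rfl, iteratedDeriv_succ, iteratedDeriv_one]
  have hit3 : iteratedDeriv 3 κ = κ₃ := by
    rw [hκ₃def, ← hit2, show (3 : ℕ) = 2 + 1 from rfl, iteratedDeriv_succ]
  have hit4 : iteratedDeriv 4 κ = κ₄ := by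
    rw [hκ₄def, ← hit3, show (4 : ℕ) = 3 + 1 from rfl, iteratedDeriv_succ]
  simp only [hit2, hit3] at heq1
  simp only [hit2, hit4] at heq2
  -- smoothness and basic derivative facts
  have hκ' : ContDiffOn ℝ ∞ κ (Set.Ioo a b) := hκ.of_le (by simp)
  have hκ₁' : ContDiffOn ℝ ∞ κ₁ (Set.Ioo a b) :=
    hκ'.deriv_of_isOpen hI (by exact_mod_cast le_top)
  have hκ₂' : ContDiffOn ℝ ∞ κ₂ (Set.Ioo a b) :=
    hκ₁'.deriv_of_isOpen hI (by exact_mod_cast le_top)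
  have hdκ : ∀ s ∈ Set.Ioo a b, HasDerivAt κ (κ₁ s) s := fun s hs =>
    ((hκ'.differentiableOn (by simp)).differentiableAt
      (hI.mem_nhds hs)).hasDerivAt
  have hdκ₁ : ∀ s ∈ Set.Ioo a b, HasDerivAt κ₁ (κ₂ s) s := fun s hs =>
    ((hκ₁'.differentiableOn (by simp)).differentiableAt
      (hI.mem_nhds hs)).hasDerivAt
  have hdκ₂ : ∀ s ∈ Set.Ioo a b, HasDerivAt κ₂ (κ₃ s) s := fun s hs =>
    ((hκ₂'.differentiableOn (by simp)).differentiableAt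
      (hI.mem_nhds hs)).hasDerivAt
  have hne : ∀ s ∈ Set.Ioo a b, κ s ≠ 0 := fun s hs => (hpos s hs).ne'
  -- first conserved quantity c
  obtain ⟨c, hcdef⟩ : ∃ c : ℝ, c = (κ s₀) ^ 2 * κ₂ s₀ - 2 / 5 * (κ s₀) ^ 5 := ⟨_, rfl⟩
  have e2 : ∀ s ∈ Set.Ioo a b, (κ s) ^ 2 * κ₂ s = 2 / 5 * (κ s) ^ 5 + c := by
    intro s hs
    have hFs := my_const (f := fun t => (κ t) ^ 2 * κ₂ t - 2 / 5 * (κ t) ^ 5) hconv hI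
      (fun z hz => by
        have H := (((hdκ z hz).pow 2).mul (hdκ₂ z hz)).sub (((hdκ z hz).pow 5).const_mul (2/5 : ℝ))
        refine H.congr_deriv ?_; symm
        have h1 := heq1 z hz
        push_cast [Pi.pow_apply]
        linear_combination (-(κ z)) * h1) hs hs₀
    rw [hcdef]
    linarith [hFs]
  have hκ₂div : ∀ s ∈ Set.Ioo a b, κ₂ s = 2 / 5 * (κ s) ^ 3 + c / (κ s) ^ 2 := by
    intro s hs
    have h := e2 s hs
    have hs0 := hne s hs
    field_simp
    linear_combination 5 * h
  -- second conserved quantity d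
  obtain ⟨d, hddef⟩ : ∃ d : ℝ, d = 1 / 2 * (κ₁ s₀) ^ 2 - 1 / 10 * (κ s₀) ^ 4 + c / κ s₀ :=
    ⟨_, rfl⟩
  have e1 : ∀ s ∈ Set.Ioo a b, κ s * (κ₁ s) ^ 2
      = 1 / 5 * (κ s) ^ 5 - 2 * c + 2 * d * κ s := by
    intro s hs
    have hGs : 1 / 2 * (κ₁ s) ^ 2 - 1 / 10 * (κ s) ^ 4 + c / κ s = d := by
      rw [hddef]
      exact my_const
        (f := fun t => 1 / 2 * (κ₁ t) ^ 2 - 1 / 10 * (κ t) ^ 4 + c / κ t) hconv hI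
        (fun z hz => by
          have H := ((((hdκ₁ z hz).pow 2).const_mul (1/2 : ℝ)).sub
            (((hdκ z hz).pow 4).const_mul (1/10 : ℝ))).add
            ((hasDerivAt_const z c).div (hdκ z hz) (hne z hz))
          refine H.congr_deriv ?_; symm
          have hz0 := hne z hz
          field_simp
          linear_combination (-20 * κ₁ z) * (e2 z hz)) hs hs₀
    have hs0 := hne s hs
    field_simp at hGs
    linarith [hGs]
  -- formula for κ₃
  have hκ₃div : ∀ s ∈ Set.Ioo a b,
      κ₃ s = 6 / 5 * (κ s) ^ 2 * κ₁ s - 2 * c * κ₁ s / (κ s) ^ 3 := by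
    intro s hs
    have Hg : HasDerivAt (fun t => 2 / 5 * (κ t) ^ 3 + c / (κ t) ^ 2)
        (2 / 5 * ((3 : ℕ) * (κ s) ^ 2 * κ₁ s)
          + (0 * (κ s) ^ 2 - c * ((2 : ℕ) * (κ s) ^ 1 * κ₁ s)) / ((κ s) ^ 2) ^ 2) s :=
      (((hdκ s hs).pow 3).const_mul (2/5 : ℝ)).add
        ((hasDerivAt_const s c).div ((hdκ s hs).pow 2) (pow_ne_zero 2 (hne s hs)))
    have hev : κ₂ =ᶠ[nhds s] fun t => 2 / 5 * (κ t) ^ 3 + c / (κ t) ^ 2 :=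
      Filter.eventuallyEq_of_mem (hI.mem_nhds hs) (fun t ht => hκ₂div t ht)
    have := (Hg.congr_of_eventuallyEq hev).deriv
    rw [← hκ₃def] at this
    rw [this]
    have hs0 := hne s hs
    field_simp
    ring
  -- formula for κ₄ (cleared form)
  have e4 : ∀ s ∈ Set.Ioo a b, (κ s) ^ 4 * κ₄ s
      = 12 / 5 * (κ s) ^ 5 * (κ₁ s) ^ 2 + 6 / 5 * (κ s) ^ 6 * κ₂ s
        + 6 * c * (κ₁ s) ^ 2 - 2 * c * κ s * κ₂ s := by
    intro s hs
    have Hh : HasDerivAt (fun t => 6 / 5 * (κ t) ^ 2 * κ₁ t - 2 * c * κ₁ t / (κ t) ^ 3)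
        ((6 / 5 * ((2 : ℕ) * (κ s) ^ 1 * κ₁ s)) * κ₁ s + (6 / 5 * (κ s) ^ 2) * κ₂ s
          - ((2 * c * κ₂ s) * (κ s) ^ 3 - (2 * c * κ₁ s) * ((3 : ℕ) * (κ s) ^ 2 * κ₁ s))
            / ((κ s) ^ 3) ^ 2) s := by
      have t1 : HasDerivAt (fun t => 6 / 5 * (κ t) ^ 2 * κ₁ t)
          ((6 / 5 * ((2 : ℕ) * (κ s) ^ 1 * κ₁ s)) * κ₁ s + (6 / 5 * (κ s) ^ 2) * κ₂ s) s :=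
        (((hdκ s hs).pow 2).const_mul (6/5 : ℝ)).mul (hdκ₁ s hs)
      have t2 : HasDerivAt (fun t => 2 * c * κ₁ t / (κ t) ^ 3)
          (((2 * c * κ₂ s) * (κ s) ^ 3 - (2 * c * κ₁ s) * ((3 : ℕ) * (κ s) ^ 2 * κ₁ s))
            / ((κ s) ^ 3) ^ 2) s :=
        ((hdκ₁ s hs).const_mul (2 * c)).div ((hdκ s hs).pow 3) (pow_ne_zero 3 (hne s hs))
      exact t1.sub t2
    have hev : κ₃ =ᶠ[nhds s] fun t => 6 / 5 * (κ t) ^ 2 * κ₁ t - 2 * c * κ₁ t / (κ t) ^ 3 :=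
      Filter.eventuallyEq_of_mem (hI.mem_nhds hs) (fun t ht => hκ₃div t ht)
    have hd4 := (Hh.congr_of_eventuallyEq hev).deriv
    rw [← hκ₄def] at hd4
    rw [hd4]
    have hs0 := hne s hs
    field_simp
    ring
  -- the polynomial identity on the range of κ
  have key : ∀ s ∈ Set.Ioo a b,
      -(126/25) * (κ s) ^ 10 - 8/5 * K * (κ s) ^ 8 - 126/5 * d * (κ s) ^ 6
        + 84/5 * c * (κ s) ^ 5 + K * c * (κ s) ^ 3 + 12 * c * d * κ s - 14 * c ^ 2 = 0 := by
    intro s hs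
    linear_combination (κ s) ^ 5 * (heq2 s hs) - (κ s) * (e4 s hs)
      + (63/5 * (κ s) ^ 5 - 6 * c) * (e1 s hs)
      + (44/5 * (κ s) ^ 5 + 2 * c - K * (κ s) ^ 3) * (e2 s hs)
  -- κ is constant
  have habs : ∀ x ∈ Set.Ioo a b, ∀ y ∈ Set.Ioo a b, κ x < κ y → False := by
    intro x hx y hy hlt
    set P : Polynomial ℝ :=
      Polynomial.C (-(126/25) : ℝ) * Polynomial.X ^ 10
        + Polynomial.C (-(8/5) * K) * Polynomial.X ^ 8
        + Polynomial.C (-(126/5) * d) * Polynomial.X ^ 6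
        + Polynomial.C (84/5 * c) * Polynomial.X ^ 5
        + Polynomial.C (K * c) * Polynomial.X ^ 3
        + Polynomial.C (12 * c * d) * Polynomial.X
        + Polynomial.C (-14 * c ^ 2) with hPdef
    have hroots : Set.Icc (κ x) (κ y) ⊆ {u | P.IsRoot u} := by
      intro u hu
      have hsub : Set.uIcc x y ⊆ Set.Ioo a b :=
        (Set.ordConnected_Ioo).uIcc_subset hx hy
      have hmem : u ∈ Set.uIcc (κ x) (κ y) := by
        rw [Set.uIcc_of_le hlt.le]; exact hu
      obtain ⟨t, ht, hteq⟩ :=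
        intermediate_value_uIcc (hκ.continuousOn.mono hsub) hmem
      have htI : t ∈ Set.Ioo a b := hsub ht
      have := key t htI
      rw [hteq] at this
      simp only [Set.mem_setOf_eq, Polynomial.IsRoot, hPdef]
      simp only [Polynomial.eval_add, Polynomial.eval_mul, Polynomial.eval_pow,
        Polynomial.eval_C, Polynomial.eval_X]
      linarith [this]
    have hPzero : P = 0 :=
      P.eq_zero_of_infinite_isRoot ((Set.Icc_infinite hlt).mono hroots)
    have h10 := congrArg (fun p => Polynomial.coeff p 10) hPzero
    simp only [hPdef, Polynomial.coeff_add, Polynomial.coeff_C_mul, Polynomial.coeff_X_pow,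
      Polynomial.coeff_X, Polynomial.coeff_C, Polynomial.coeff_zero] at h10
    norm_num at h10
  have hconstAll : ∀ s ∈ Set.Ioo a b, κ s = κ s₀ := by
    intro s hs
    rcases lt_trichotomy (κ s) (κ s₀) with h | h | h
    · exact absurd (habs s hs s₀ hs₀ h) (fun f => f)
    · exact h
    · exact absurd (habs s₀ hs₀ s hs h) (fun f => f)
  -- conclude
  refine ⟨κ s₀, hconstAll, ?_, ?_⟩
  all_goals {
    have h1z : ∀ s ∈ Set.Ioo a b, κ₁ s = 0 := by
      intro s hs
      have hev : κ =ᶠ[nhds s] fun _ => κ s₀ :=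
        Filter.eventuallyEq_of_mem (hI.mem_nhds hs) (fun t ht => hconstAll t ht)
      rw [hκ₁def]
      rw [hev.deriv_eq, deriv_const]
    have h2z : ∀ s ∈ Set.Ioo a b, κ₂ s = 0 := by
      intro s hs
      have hev : κ₁ =ᶠ[nhds s] fun _ => 0 :=
        Filter.eventuallyEq_of_mem (hI.mem_nhds hs) (fun t ht => h1z t ht)
      rw [hκ₂def, hev.deriv_eq, deriv_const]
    have h3z : ∀ s ∈ Set.Ioo a b, κ₃ s = 0 := by
      intro s hs
      have hev : κ₂ =ᶠ[nhds s] fun _ => 0 :=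
        Filter.eventuallyEq_of_mem (hI.mem_nhds hs) (fun t ht => h2z t ht)
      rw [hκ₃def, hev.deriv_eq, deriv_const]
    have h4z : κ₄ s₀ = 0 := by
      have hev : κ₃ =ᶠ[nhds s₀] fun _ => 0 :=
        Filter.eventuallyEq_of_mem (hI.mem_nhds hs₀) (fun t ht => h3z t ht)
      rw [hκ₄def, hev.deriv_eq, deriv_const]
    have hfin := heq2 s₀ hs₀
    rw [h4z, h1z s₀ hs₀, h2z s₀ hs₀] at hfin
    have hk0 := hpos s₀ hs₀
    have hcube : (κ s₀) ^ 3 * ((κ s₀) ^ 2 - 2 * K) = 0 := by linear_combination hfin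
    have h2K : (κ s₀) ^ 2 = 2 * K := by
      rcases mul_eq_zero.mp hcube with h | h
      · exact absurd h (pow_ne_zero 3 hk0.ne')
      · linarith
    first
      | exact h2K
      | (have : 0 < (κ s₀) ^ 2 := by positivity
         linarith)
  }
end

section
/- Let I ⊂ ℝ be a nonempty open interval and K ∈ ℝ a constant with K ≤ 0. Then there is no smooth function κ : I → ℝ with κ(s) > 0 for all s ∈ I satisfying both κ·κ''' + 2κ'·κ'' − 2κ³·κ' = 0 and κ⁽⁴⁾ − 15κ(κ')² − 10κ²κ'' + κ⁵ + K(κ'' − 2κ³) = 0 on I. -/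
lemma const_of_hasDerivAt_zero {f : ℝ → ℝ} {a b : ℝ}
    (hd : ∀ x ∈ Set.Ioo a b, HasDerivAt f 0 x)
    {x y : ℝ} (hx : x ∈ Set.Ioo a b) (hy : y ∈ Set.Ioo a b) : f x = f y := by
  wlog h : x ≤ y generalizing x y
  · exact (this hy hx (le_of_not_ge h)).symm
  have hsub : Set.Icc x y ⊆ Set.Ioo a b := fun t ht =>
    ⟨lt_of_lt_of_le hx.1 ht.1, lt_of_le_of_lt ht.2 hy.2⟩
  have := constant_of_has_deriv_right_zero (f := f) (a := x) (b := y)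
    (fun t ht => (hd t (hsub ht)).continuousAt.continuousWithinAt)
    (fun t ht => ((hd t (hsub (Set.Ico_subset_Icc_self ht))).hasDerivWithinAt))
  exact (this y (Set.right_mem_Icc.2 h)).symm

lemma key_alg (k k1 k2 k4 c₁ c₂ K : ℝ)
    (h2 : k2 * k^2 = 2/5*k^5 + c₁)
    (h12 : k1^2 * k = k^5/5 - 2*c₁ + c₂*k)
    (h4 : k4 * k^4 = 12/5*k^5*k1^2 + 6/5*k^6*k2 - 2*c₁*k2*k + 6*c₁*k1^2)
    (e2 : k4 - 15*k*k1^2 - 10*k^2*k2 + k^5 + K*(k2 - 2*k^3) = 0) :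
    -(126/25)*k^10 - 8/5*K*k^8 - 63/5*c₂*k^6 + 84/5*c₁*k^5 + K*c₁*k^3 + 6*c₁*c₂*k - 14*c₁^2 = 0 := by
  linear_combination k^5*e2 - k*h4 - (-(63/5)*k^5 + 6*c₁)*h12 - (-(44/5)*k^5 - 2*c₁ + K*k^3)*h2

/-- On a nonempty open interval there is no smooth positive solution of both the
tangential and normal triharmonic equations when the constant Gaussian curvature
satisfies `K ≤ 0`. -/
theorem stmt_5 (a b : ℝ) (hab : a < b) (K : ℝ) (hK : K ≤ 0) :
    ¬ ∃ κ : ℝ → ℝ,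
      ContDiffOn ℝ (⊤ : ℕ∞) κ (Set.Ioo a b) ∧
      (∀ s ∈ Set.Ioo a b, 0 < κ s) ∧
      (∀ s ∈ Set.Ioo a b,
        κ s * iteratedDeriv 3 κ s + 2 * deriv κ s * iteratedDeriv 2 κ s
          - 2 * (κ s) ^ 3 * deriv κ s = 0) ∧
      (∀ s ∈ Set.Ioo a b,
        iteratedDeriv 4 κ s - 15 * κ s * (deriv κ s) ^ 2
          - 10 * (κ s) ^ 2 * iteratedDeriv 2 κ s + (κ s) ^ 5
          + K * (iteratedDeriv 2 κ s - 2 * (κ s) ^ 3) = 0) := by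
  rintro ⟨κ, hsm, hpos, heq1, heq2⟩
  have hI : IsOpen (Set.Ioo a b) := isOpen_Ioo
  obtain ⟨s₀, hs₀⟩ : (Set.Ioo a b).Nonempty := Set.nonempty_Ioo.2 hab
  set κ₁ : ℝ → ℝ := deriv κ with hk1def
  set κ₂ : ℝ → ℝ := deriv κ₁ with hk2def
  set κ₃ : ℝ → ℝ := deriv κ₂ with hk3def
  set κ₄ : ℝ → ℝ := deriv κ₃ with hk4def
  have hit2 : iteratedDeriv 2 κ = κ₂ := by
    rw [show (2:ℕ) = 1+1 from rfl, iteratedDeriv_succ, iteratedDeriv_one, hk2def, hk1def]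
  have hit3 : iteratedDeriv 3 κ = κ₃ := by
    rw [show (3:ℕ) = 2+1 from rfl, iteratedDeriv_succ, hit2, hk3def]
  have hit4 : iteratedDeriv 4 κ = κ₄ := by
    rw [show (4:ℕ) = 3+1 from rfl, iteratedDeriv_succ, hit3, hk4def]
  simp only [hit2, hit3, hit4] at heq1 heq2
  -- smoothness of derivatives
  have hsm1 : ContDiffOn ℝ (⊤ : ℕ∞) κ₁ (Set.Ioo a b) := hsm.deriv_of_isOpen hI (by simp)
  have hsm2 : ContDiffOn ℝ (⊤ : ℕ∞) κ₂ (Set.Ioo a b) := hsm1.deriv_of_isOpen hI (by simp)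
  have hsm3 : ContDiffOn ℝ (⊤ : ℕ∞) κ₃ (Set.Ioo a b) := hsm2.deriv_of_isOpen hI (by simp)
  have hdκ : ∀ s ∈ Set.Ioo a b, HasDerivAt κ (κ₁ s) s := by
    intro s hs
    exact ((hsm.differentiableOn (by simp)).differentiableAt (hI.mem_nhds hs)).hasDerivAt
  have hdκ₁ : ∀ s ∈ Set.Ioo a b, HasDerivAt κ₁ (κ₂ s) s := by
    intro s hs
    exact ((hsm1.differentiableOn (by simp)).differentiableAt (hI.mem_nhds hs)).hasDerivAt
  have hdκ₂ : ∀ s ∈ Set.Ioo a b, HasDerivAt κ₂ (κ₃ s) s := by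
    intro s hs
    exact ((hsm2.differentiableOn (by simp)).differentiableAt (hI.mem_nhds hs)).hasDerivAt
  have hdκ₃ : ∀ s ∈ Set.Ioo a b, HasDerivAt κ₃ (κ₄ s) s := by
    intro s hs
    exact ((hsm3.differentiableOn (by simp)).differentiableAt (hI.mem_nhds hs)).hasDerivAt
  obtain ⟨c₁, hC1⟩ : ∃ c₁, ∀ s ∈ Set.Ioo a b, κ s^2 * κ₂ s - 2/5 * κ s^5 = c₁ := by
    refine ⟨κ s₀^2 * κ₂ s₀ - 2/5 * κ s₀^5, fun s hs => ?_⟩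
    refine const_of_hasDerivAt_zero (f := fun t => κ t^2 * κ₂ t - 2/5 * κ t^5) ?_ hs hs₀
    intro t ht
    have h := (((hdκ t ht).pow 2).mul (hdκ₂ t ht)).sub (((hdκ t ht).pow 5).const_mul (2/5))
    refine h.congr_deriv ?_
    have e1 := heq1 t ht
    simp only [Pi.pow_apply]
    linear_combination (κ t) * e1
  have hk2 : ∀ s ∈ Set.Ioo a b, κ₂ s * κ s^2 = 2/5*κ s^5 + c₁ := by
    intro s hs
    linear_combination hC1 s hs
  have hk2' : ∀ s ∈ Set.Ioo a b, κ₂ s = 2/5*κ s^3 + c₁/κ s^2 := by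
    intro s hs
    have hne : κ s ≠ 0 := (hpos s hs).ne'
    field_simp
    linear_combination 5 * hk2 s hs
  obtain ⟨c₂, hC2⟩ : ∃ c₂, ∀ s ∈ Set.Ioo a b, κ₁ s^2 - κ s^4/5 + 2*c₁*(κ s)⁻¹ = c₂ := by
    refine ⟨κ₁ s₀^2 - κ s₀^4/5 + 2*c₁*(κ s₀)⁻¹, fun s hs => ?_⟩
    refine const_of_hasDerivAt_zero
      (f := fun t => κ₁ t^2 - κ t^4/5 + 2*c₁*(κ t)⁻¹) ?_ hs hs₀
    intro t ht
    have hne : κ t ≠ 0 := (hpos t ht).ne'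
    have h := (((hdκ₁ t ht).pow 2).sub (((hdκ t ht).pow 4).div_const 5)).add
      (((hdκ t ht).inv hne).const_mul (2*c₁))
    refine h.congr_deriv ?_
    rw [hk2' t ht]
    field_simp
    ring
  have hd3 : ∀ s ∈ Set.Ioo a b, κ₃ s = 6/5*κ s^2*κ₁ s - 2*c₁*κ₁ s/κ s^3 := by
    intro s hs
    have hne : κ s ≠ 0 := (hpos s hs).ne'
    have hev : κ₂ =ᶠ[nhds s] fun t => 2/5*κ t^3 + c₁/κ t^2 :=
      Filter.eventuallyEq_of_mem (hI.mem_nhds hs) hk2'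
    have hg : HasDerivAt (fun t => 2/5*κ t^3 + c₁/κ t^2)
        (6/5*κ s^2*κ₁ s - 2*c₁*κ₁ s/κ s^3) s := by
      have h := (((hdκ s hs).pow 3).const_mul (2/5)).add
        ((hasDerivAt_const s c₁).div ((hdκ s hs).pow 2) (pow_ne_zero 2 hne))
      refine h.congr_deriv ?_
      simp only [Pi.pow_apply]
      field_simp
      ring
    rw [hk3def, hev.deriv_eq]
    exact hg.deriv
  have hd4 : ∀ s ∈ Set.Ioo a b, κ₄ s = 12/5*κ s*κ₁ s^2 + 6/5*κ s^2*κ₂ s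
      - 2*c₁*κ₂ s/κ s^3 + 6*c₁*κ₁ s^2/κ s^4 := by
    intro s hs
    have hne : κ s ≠ 0 := (hpos s hs).ne'
    have hev : κ₃ =ᶠ[nhds s] fun t => 6/5*κ t^2*κ₁ t - 2*c₁*κ₁ t/κ t^3 :=
      Filter.eventuallyEq_of_mem (hI.mem_nhds hs) hd3
    have hg : HasDerivAt (fun t => 6/5*κ t^2*κ₁ t - 2*c₁*κ₁ t/κ t^3)
        (12/5*κ s*κ₁ s^2 + 6/5*κ s^2*κ₂ s - 2*c₁*κ₂ s/κ s^3 + 6*c₁*κ₁ s^2/κ s^4) s := by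
      have h := ((((hdκ s hs).pow 2).const_mul (6/5)).mul (hdκ₁ s hs)).sub
        (((hdκ₁ s hs).const_mul (2*c₁)).div ((hdκ s hs).pow 3) (pow_ne_zero 3 hne))
      refine h.congr_deriv ?_
      simp only [Pi.pow_apply]
      field_simp
      ring
    rw [hk4def, hev.deriv_eq]
    exact hg.deriv
  have hpoly : ∀ s ∈ Set.Ioo a b,
      -(126/25)*κ s^10 - 8/5*K*κ s^8 - 63/5*c₂*κ s^6 + 84/5*c₁*κ s^5
        + K*c₁*κ s^3 + 6*c₁*c₂*κ s - 14*c₁^2 = 0 := by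
    intro s hs
    have hne : κ s ≠ 0 := (hpos s hs).ne'
    refine key_alg (κ s) (κ₁ s) (κ₂ s) (κ₄ s) c₁ c₂ K (hk2 s hs) ?_ ?_ ?_
    · rw [← hC2 s hs]
      field_simp
      ring
    · rw [hd4 s hs]
      field_simp
    · linear_combination heq2 s hs
  by_cases hflat : ∀ s ∈ Set.Ioo a b, κ₁ s = 0
  · have h20 : ∀ s ∈ Set.Ioo a b, κ₂ s = 0 := by
      intro s hs
      have hev : κ₁ =ᶠ[nhds s] fun _ => (0:ℝ) :=
        Filter.eventuallyEq_of_mem (hI.mem_nhds hs) hflat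
      rw [hk2def, hev.deriv_eq, deriv_const]
    have h40 : ∀ s ∈ Set.Ioo a b, κ₄ s = 0 := by
      have h30 : ∀ s ∈ Set.Ioo a b, κ₃ s = 0 := by
        intro s hs
        have hev : κ₂ =ᶠ[nhds s] fun _ => (0:ℝ) :=
          Filter.eventuallyEq_of_mem (hI.mem_nhds hs) h20
        rw [hk3def, hev.deriv_eq, deriv_const]
      intro s hs
      have hev : κ₃ =ᶠ[nhds s] fun _ => (0:ℝ) :=
        Filter.eventuallyEq_of_mem (hI.mem_nhds hs) h30
      rw [hk4def, hev.deriv_eq, deriv_const]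
    have e2 := heq2 s₀ hs₀
    rw [hflat s₀ hs₀, h20 s₀ hs₀, h40 s₀ hs₀] at e2
    have hp := hpos s₀ hs₀
    nlinarith [pow_pos hp 5, pow_pos hp 3,
      mul_nonneg (neg_nonneg.2 hK) (le_of_lt (pow_pos hp 3))]
  · push_neg at hflat
    obtain ⟨s₁, hs₁, hκ₁ne⟩ := hflat
    have hex : ∃ t ∈ Set.Ioo a b, κ t ≠ κ s₁ := by
      by_contra h
      push_neg at h
      have hev : κ =ᶠ[nhds s₁] fun _ => κ s₁ :=
        Filter.eventuallyEq_of_mem (hI.mem_nhds hs₁) h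
      exact hκ₁ne (by rw [hk1def, hev.deriv_eq, deriv_const])
    obtain ⟨t, ht, hne⟩ := hex
    set Q : Polynomial ℝ := Polynomial.C (-(126/25)) * Polynomial.X^10
      + Polynomial.C (-(8/5)*K) * Polynomial.X^8
      + Polynomial.C (-(63/5)*c₂) * Polynomial.X^6
      + Polynomial.C (84/5*c₁) * Polynomial.X^5
      + Polynomial.C (K*c₁) * Polynomial.X^3
      + Polynomial.C (6*c₁*c₂) * Polynomial.X
      + Polynomial.C (-(14)*c₁^2) with hQ
    have hroot : ∀ s ∈ Set.Ioo a b, Q.IsRoot (κ s) := by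
      intro s hs
      simp only [hQ, Polynomial.IsRoot, Polynomial.eval_add, Polynomial.eval_mul,
        Polynomial.eval_pow, Polynomial.eval_C, Polynomial.eval_X]
      linear_combination hpoly s hs
    have hsubI : Set.uIcc t s₁ ⊆ Set.Ioo a b :=
      Set.OrdConnected.uIcc_subset Set.ordConnected_Ioo ht hs₁
    have hIVT := intermediate_value_uIcc ((hsm.continuousOn).mono hsubI)
    have hinf : {x | Q.IsRoot x}.Infinite := by
      refine Set.Infinite.mono ?_ (Set.Icc_infinite (inf_lt_sup.mpr hne))
      intro y hy
      obtain ⟨u, hu, huy⟩ := hIVT hy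
      exact huy ▸ hroot u (hsubI hu)
    have hQ0 : Q = 0 := Polynomial.eq_zero_of_infinite_isRoot Q hinf
    have hc : Q.coeff 10 = -(126/25) := by
      simp only [hQ, Polynomial.coeff_add, Polynomial.coeff_C_mul, Polynomial.coeff_X_pow,
        Polynomial.coeff_C, Polynomial.coeff_X]
      norm_num
    rw [hQ0] at hc
    norm_num at hc
end

section
/- Let I ⊂ ℝ be an open interval, τ₀ ∈ ℝ a constant, and κ : I → ℝ a smooth function with κ(s) ≠ 0 for all s ∈ I satisfying κ·κ''' − (2κ² + τ₀²)·κ·κ' + 2κ'·κ'' = 0 on I. Then there exist constants c₁, c₂ ∈ ℝ such that 5(κ'(s))² = c₂ − 2c₁/κ(s) + κ⁴(s) + (5/3)τ₀²κ²(s) for all s ∈ I. -/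
open Set

lemma const_of_hasDerivAt_zero_s7 {a b : ℝ} {f : ℝ → ℝ}
    (h : ∀ s ∈ Ioo a b, HasDerivAt f 0 s) :
    ∀ x ∈ Ioo a b, ∀ y ∈ Ioo a b, f x = f y := by
  intro x hx y hy
  refine (convex_Ioo a b).is_const_of_fderivWithin_eq_zero
    (fun s hs => ((h s hs).differentiableAt).differentiableWithinAt) (fun s hs => ?_) hx hy
  rw [fderivWithin_of_isOpen isOpen_Ioo hs, (h s hs).hasFDerivAt.fderiv]
  ext
  simp

/-- A smooth nonvanishing solution of `κκ''' − (2κ² + τ₀²)κκ' + 2κ'κ'' = 0` on an open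
interval satisfies, for suitable constants `c₁, c₂`,
`5(κ')² = c₂ − 2c₁/κ + κ⁴ + (5/3)τ₀²κ²`. -/
theorem stmt_7 (a b : ℝ) (τ₀ : ℝ) (κ : ℝ → ℝ)
    (hκ : ContDiffOn ℝ (⊤ : ℕ∞) κ (Set.Ioo a b))
    (hne : ∀ s ∈ Set.Ioo a b, κ s ≠ 0)
    (hode : ∀ s ∈ Set.Ioo a b,
      κ s * iteratedDeriv 3 κ s - (2 * (κ s) ^ 2 + τ₀ ^ 2) * κ s * deriv κ s
        + 2 * deriv κ s * iteratedDeriv 2 κ s = 0) :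
    ∃ c₁ c₂ : ℝ, ∀ s ∈ Set.Ioo a b,
      5 * (deriv κ s) ^ 2
        = c₂ - 2 * c₁ / κ s + (κ s) ^ 4 + 5 / 3 * τ₀ ^ 2 * (κ s) ^ 2 := by
  rcases (Ioo a b).eq_empty_or_nonempty with he | ⟨s₀, hs₀⟩
  · exact ⟨0, 0, fun s hs => absurd hs (by simp [he])⟩
  have hop : IsOpen (Ioo a b) := isOpen_Ioo
  have hκ1 : ContDiffOn ℝ (⊤ : ℕ∞) (deriv κ) (Ioo a b) := hκ.deriv_of_isOpen hop (by simp)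
  have hκ2 : ContDiffOn ℝ (⊤ : ℕ∞) (deriv (deriv κ)) (Ioo a b) := hκ1.deriv_of_isOpen hop (by simp)
  have hd0 : ∀ s ∈ Ioo a b, HasDerivAt κ (deriv κ s) s := fun s hs =>
    ((hκ.contDiffAt (hop.mem_nhds hs)).differentiableAt (by simp)).hasDerivAt
  have hd1 : ∀ s ∈ Ioo a b, HasDerivAt (deriv κ) (deriv (deriv κ) s) s := fun s hs =>
    ((hκ1.contDiffAt (hop.mem_nhds hs)).differentiableAt (by simp)).hasDerivAt
  have hd2 : ∀ s ∈ Ioo a b, HasDerivAt (deriv (deriv κ)) (deriv (deriv (deriv κ)) s) s :=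
    fun s hs => ((hκ2.contDiffAt (hop.mem_nhds hs)).differentiableAt (by simp)).hasDerivAt
  have hit2 : iteratedDeriv 2 κ = deriv (deriv κ) := by
    rw [iteratedDeriv_succ, iteratedDeriv_one]
  have hit3 : iteratedDeriv 3 κ = deriv (deriv (deriv κ)) := by
    rw [iteratedDeriv_succ, hit2]
  -- first integral: (κ²κ'')' = κ·ODE, so κ²κ'' − (2/5)κ⁵ − (τ₀²/3)κ³ is constant
  have hFd : ∀ s ∈ Ioo a b, HasDerivAt
      (fun s => (κ s)^2 * deriv (deriv κ) s - 2/5 * (κ s)^5 - τ₀^2/3 * (κ s)^3) 0 s := by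
    intro s hs
    have h := ((((hd0 s hs).pow 2).mul (hd2 s hs)).sub
        (((hd0 s hs).pow 5).const_mul (2/5))).sub (((hd0 s hs).pow 3).const_mul (τ₀^2/3))
    refine h.congr_deriv ?_
    have hthis := hode s hs
    rw [hit2, hit3] at hthis
    push_cast [Pi.pow_apply]
    linear_combination (κ s) * hthis
  obtain ⟨C₁, hC₁⟩ : ∃ C₁, ∀ s ∈ Ioo a b,
      (κ s)^2 * deriv (deriv κ) s - 2/5 * (κ s)^5 - τ₀^2/3 * (κ s)^3 = C₁ :=
    ⟨_, fun s hs => const_of_hasDerivAt_zero_s7 hFd s hs s₀ hs₀⟩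
  -- second integral
  have hGd : ∀ s ∈ Ioo a b, HasDerivAt
      (fun s => (deriv κ s)^2 - (κ s)^4/5 - τ₀^2 * (κ s)^2/3 + 2*C₁/(κ s)) 0 s := by
    intro s hs
    have hκs := hne s hs
    have h := ((((hd1 s hs).pow 2).sub (((hd0 s hs).pow 4).div_const 5)).sub
        ((((hd0 s hs).pow 2).const_mul (τ₀^2)).div_const 3)).add
        ((hasDerivAt_const s (2*C₁)).div (hd0 s hs) hκs)
    refine h.congr_deriv ?_
    have hF1 := hC₁ s hs
    push_cast [Pi.pow_apply]
    field_simp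
    linear_combination (30 * deriv κ s) * hF1
  obtain ⟨C₂, hC₂⟩ : ∃ C₂, ∀ s ∈ Ioo a b,
      (deriv κ s)^2 - (κ s)^4/5 - τ₀^2 * (κ s)^2/3 + 2*C₁/(κ s) = C₂ :=
    ⟨_, fun s hs => const_of_hasDerivAt_zero_s7 hGd s hs s₀ hs₀⟩
  refine ⟨5*C₁, 5*C₂, fun s hs => ?_⟩
  have hG1 := hC₂ s hs
  have hκs := hne s hs
  field_simp at hG1 ⊢
  linear_combination hG1
end

section
/- Let I ⊂ ℝ be an open interval, τ₀, ρ ∈ ℝ constants, and κ : I → ℝ a smooth function satisfying both κ·κ''' − (2κ² + τ₀²)·κ·κ' + 2κ'·κ'' = 0 and 4κ''' − 4τ₀²κ' − 9κ²κ' + 2ρκ' = 0 on I. Then there exists a constant c₀ ∈ ℝ such that 4(κ'(s))² = c₀ + κ²(s)(ρ − κ²(s)/4) for all s ∈ I. -/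
/-- A smooth solution of both the tangential and binormal triharmonic equations for a
curve of constant torsion `τ₀` in a 3-space form of curvature `ρ` satisfies, for a
suitable constant `c₀`, the first integral `4(κ')² = c₀ + κ²(ρ − κ²/4)`. -/
theorem stmt_8 (a b : ℝ) (τ₀ ρ : ℝ) (κ : ℝ → ℝ)
    (hκ : ContDiffOn ℝ (⊤ : ℕ∞) κ (Set.Ioo a b))
    (heq1 : ∀ s ∈ Set.Ioo a b,
      κ s * iteratedDeriv 3 κ s - (2 * (κ s) ^ 2 + τ₀ ^ 2) * κ s * deriv κ s
        + 2 * deriv κ s * iteratedDeriv 2 κ s = 0)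
    (heq2 : ∀ s ∈ Set.Ioo a b,
      4 * iteratedDeriv 3 κ s - 4 * τ₀ ^ 2 * deriv κ s - 9 * (κ s) ^ 2 * deriv κ s
        + 2 * ρ * deriv κ s = 0) :
    ∃ c₀ : ℝ, ∀ s ∈ Set.Ioo a b,
      4 * (deriv κ s) ^ 2 = c₀ + (κ s) ^ 2 * (ρ - (κ s) ^ 2 / 4) := by
  rcases le_or_gt b a with hba | hab
  · exact ⟨0, fun s hs => absurd ((hs.1.trans hs.2).trans_le hba) (lt_irrefl a)⟩
  set I := Set.Ioo a b with hI
  have hopen : IsOpen I := isOpen_Ioo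
  have hκ1 : ContDiffOn ℝ (⊤ : ℕ∞) (deriv κ) I := hκ.deriv_of_isOpen hopen (by simp)
  have hκ2 : ContDiffOn ℝ (⊤ : ℕ∞) (deriv (deriv κ)) I := hκ1.deriv_of_isOpen hopen (by simp)
  -- the candidate conserved quantity
  set F : ℝ → ℝ := fun s => 4 * (deriv κ s) ^ 2 - (κ s) ^ 2 * (ρ - (κ s) ^ 2 / 4) with hF
  have hhas : ∀ s ∈ I, HasDerivAt F 0 s := by
    intro s hs
    have hmem := hopen.mem_nhds hs
    have h0 : HasDerivAt κ (deriv κ s) s :=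
      ((hκ.differentiableOn (by simp)).differentiableAt hmem).hasDerivAt
    have h1 : HasDerivAt (deriv κ) (deriv (deriv κ) s) s :=
      ((hκ1.differentiableOn (by simp)).differentiableAt hmem).hasDerivAt
    have e2 : iteratedDeriv 2 κ s = deriv (deriv κ) s := by
      simp [iteratedDeriv_succ, iteratedDeriv_one]
    have e3 : iteratedDeriv 3 κ s = deriv (deriv (deriv κ)) s := by
      simp [iteratedDeriv_succ, iteratedDeriv_one]
    have h2 : HasDerivAt (deriv (deriv κ)) (deriv (deriv (deriv κ)) s) s :=
      ((hκ2.differentiableOn (by simp)).differentiableAt hmem).hasDerivAt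
    have key : (8 * deriv κ s * deriv (deriv κ) s
        - 2 * ρ * κ s * deriv κ s + (κ s) ^ 3 * deriv κ s) = 0 := by
      have H1 := heq1 s hs
      have H2 := heq2 s hs
      rw [e2, e3] at H1
      rw [e3] at H2
      linear_combination 4 * H1 - κ s * H2
    have hD : HasDerivAt F
        (4 * (2 * deriv κ s * deriv (deriv κ) s)
          - ((2 * κ s * deriv κ s) * (ρ - (κ s) ^ 2 / 4)
            + (κ s) ^ 2 * (0 - 2 * κ s * deriv κ s / 4))) s := by
      have ha : HasDerivAt (fun x => 4 * (deriv κ x) ^ 2)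
          (4 * (2 * deriv κ s * deriv (deriv κ) s)) s := by
        have := (h1.pow 2).const_mul (4 : ℝ)
        simpa [mul_comm, mul_assoc, mul_left_comm] using this
      have hb : HasDerivAt (fun x => (κ x) ^ 2 * (ρ - (κ x) ^ 2 / 4))
          ((2 * κ s * deriv κ s) * (ρ - (κ s) ^ 2 / 4)
            + (κ s) ^ 2 * (0 - 2 * κ s * deriv κ s / 4)) s := by
        have hp : HasDerivAt (fun x => (κ x) ^ 2) (2 * κ s * deriv κ s) s := by
          have := h0.fun_pow 2
          simpa [mul_comm, mul_assoc, mul_left_comm] using this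
        have hq : HasDerivAt (fun x => ρ - (κ x) ^ 2 / 4)
            (0 - 2 * κ s * deriv κ s / 4) s := by
          exact (hasDerivAt_const s ρ).sub (hp.div_const 4)
        exact hp.mul hq
      exact ha.sub hb
    have : (4 * (2 * deriv κ s * deriv (deriv κ) s)
          - ((2 * κ s * deriv κ s) * (ρ - (κ s) ^ 2 / 4)
            + (κ s) ^ 2 * (0 - 2 * κ s * deriv κ s / 4))) = 0 := by
      nlinarith [key]
    rwa [this] at hD
  -- F is constant on the convex open set I
  have hconv : Convex ℝ I := convex_Ioo a b
  have hdiff : DifferentiableOn ℝ F I := fun s hs =>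
    ((hhas s hs).differentiableAt).differentiableWithinAt
  have hfd : ∀ s ∈ I, fderivWithin ℝ F I s = 0 := by
    intro s hs
    rw [fderivWithin_of_isOpen hopen hs, (hhas s hs).hasFDerivAt.fderiv]
    ext
    simp
  set s₀ : ℝ := (a + b) / 2 with hs₀
  have hs₀I : s₀ ∈ I := ⟨by linarith, by linarith⟩
  refine ⟨F s₀, fun s hs => ?_⟩
  have := hconv.is_const_of_fderivWithin_eq_zero hdiff hfd hs hs₀I
  have hFs : F s = F s₀ := this
  simp only [hF] at hFs ⊢
  linarith [hFs]
end

section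
/- Let I ⊂ ℝ be a nonempty open interval, τ₀, ρ ∈ ℝ constants, and κ : I → ℝ a smooth function with κ(s) > 0 for all s ∈ I satisfying both κ·κ''' − (2κ² + τ₀²)·κ·κ' + 2κ'·κ'' = 0 and 4κ''' − 4τ₀²κ' − 9κ²κ' + 2ρκ' = 0 on I. Then κ is constant on I. -/
/-- A smooth positive solution on a nonempty open interval of both the tangential and
binormal triharmonic equations (constant torsion `τ₀`, space form curvature `ρ`)
is constant. -/
theorem stmt_10 (a b : ℝ) (hab : a < b) (τ₀ ρ : ℝ) (κ : ℝ → ℝ)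
    (hκ : ContDiffOn ℝ (⊤ : ℕ∞) κ (Set.Ioo a b))
    (hpos : ∀ s ∈ Set.Ioo a b, 0 < κ s)
    (heq1 : ∀ s ∈ Set.Ioo a b,
      κ s * iteratedDeriv 3 κ s - (2 * (κ s) ^ 2 + τ₀ ^ 2) * κ s * deriv κ s
        + 2 * deriv κ s * iteratedDeriv 2 κ s = 0)
    (heq2 : ∀ s ∈ Set.Ioo a b,
      4 * iteratedDeriv 3 κ s - 4 * τ₀ ^ 2 * deriv κ s - 9 * (κ s) ^ 2 * deriv κ s
        + 2 * ρ * deriv κ s = 0) :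
    ∃ κ₀ : ℝ, ∀ s ∈ Set.Ioo a b, κ s = κ₀ := by
  set I := Set.Ioo a b with hI
  have hIo : IsOpen I := isOpen_Ioo
  have hκ1 : ContDiffOn ℝ (⊤ : ℕ∞) (deriv κ) I := hκ.deriv_of_isOpen hIo (by simp)
  have hκ2 : ContDiffOn ℝ (⊤ : ℕ∞) (deriv (deriv κ)) I := hκ1.deriv_of_isOpen hIo (by simp)
  have hdκ : ∀ s ∈ I, DifferentiableAt ℝ κ s := fun s hs =>
    (hκ.differentiableOn (by simp)).differentiableAt (hIo.mem_nhds hs)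
  have hdκ2 : ∀ s ∈ I, DifferentiableAt ℝ (deriv (deriv κ)) s := fun s hs =>
    (hκ2.differentiableOn (by simp)).differentiableAt (hIo.mem_nhds hs)
  -- rewrite iterated derivatives
  have hit2 : iteratedDeriv 2 κ = deriv (deriv κ) := by
    simp [iteratedDeriv_succ, iteratedDeriv_zero]
  have hit3 : iteratedDeriv 3 κ = deriv (deriv (deriv κ)) := by
    simp [iteratedDeriv_succ, iteratedDeriv_zero]
  -- key pointwise identity obtained by eliminating κ'''
  have hE : ∀ s ∈ I, deriv κ s *
      (κ s ^ 3 - 2 * ρ * κ s + 8 * deriv (deriv κ) s) = 0 := by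
    intro s hs
    have h1 := heq1 s hs
    have h2 := heq2 s hs
    rw [hit2, hit3] at h1
    rw [hit3] at h2
    linear_combination 4 * h1 - κ s * h2
  -- the derivative vanishes everywhere on I
  have hderiv0 : ∀ s ∈ I, deriv κ s = 0 := by
    intro s₀ hs₀
    by_contra hne
    have hcont : ContinuousAt (deriv κ) s₀ :=
      (hκ1.continuousOn.continuousAt (hIo.mem_nhds hs₀))
    have hev : ∀ᶠ t in nhds s₀, deriv κ t ≠ 0 ∧ t ∈ I :=
      (hcont.eventually_ne hne).and (hIo.mem_nhds hs₀)
    obtain ⟨U, hU, hUo, hs₀U⟩ := eventually_nhds_iff.mp hev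
    -- on U, κ'' = (2ρκ - κ³)/8
    have hsecond : ∀ t ∈ U, deriv (deriv κ) t = (2 * ρ * κ t - κ t ^ 3) / 8 := by
      intro t ht
      have h := hE t (hU t ht).2
      have hne' := (hU t ht).1
      have := mul_eq_zero.mp h
      rcases this with h' | h'
      · exact absurd h' hne'
      · linarith
    -- hence at each t ∈ U, κ''' t = (2ρ - 3κ²)κ'/8, and heq2 forces κ² constant
    have hsq : ∀ t ∈ U, 21 * κ t ^ 2 = 6 * ρ - 8 * τ₀ ^ 2 := by
      intro t ht
      have htI := (hU t ht).2
      have hevt : deriv (deriv κ) =ᶠ[nhds t] fun u => (2 * ρ * κ u - κ u ^ 3) / 8 := by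
        filter_upwards [hUo.mem_nhds ht] with u hu using hsecond u hu
      have h3 : deriv (deriv (deriv κ)) t =
          (2 * ρ * deriv κ t - 3 * κ t ^ 2 * deriv κ t) / 8 := by
        rw [hevt.deriv_eq]
        have hκt : HasDerivAt κ (deriv κ t) t := (hdκ t htI).hasDerivAt
        have hd := ((hκt.const_mul (2 * ρ)).sub (hκt.pow 3)).div_const 8
        rw [(show HasDerivAt (fun u => (2 * ρ * κ u - κ u ^ 3) / 8) _ t from hd).deriv]
        push_cast
        ring
      have h2 := heq2 t htI
      rw [hit3, h3] at h2
      have hne' := (hU t ht).1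
      have : (21 * κ t ^ 2 - (6 * ρ - 8 * τ₀ ^ 2)) * deriv κ t = 0 := by
        linear_combination -2 * h2
      rcases mul_eq_zero.mp this with h' | h'
      · linarith
      · exact absurd h' hne'
    -- so κ is locally constant near s₀, contradicting deriv κ s₀ ≠ 0
    set C : ℝ := (6 * ρ - 8 * τ₀ ^ 2) / 21 with hC
    have hκconst : κ =ᶠ[nhds s₀] fun _ => Real.sqrt C := by
      filter_upwards [hUo.mem_nhds hs₀U] with t ht
      have hsq' : κ t ^ 2 = C := by
        have := hsq t ht; rw [hC]; linarith
      have hκt0 : 0 ≤ κ t := (hpos t (hU t ht).2).le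
      calc κ t = Real.sqrt (κ t ^ 2) := (Real.sqrt_sq hκt0).symm
        _ = Real.sqrt C := by rw [hsq']
    have : deriv κ s₀ = 0 := by
      rw [hκconst.deriv_eq]; simp
    exact hne this
  -- conclude κ is constant on the convex set I
  have hconv : Convex ℝ I := convex_Ioo a b
  have hmid : (a + b) / 2 ∈ I := ⟨by linarith, by linarith⟩
  refine ⟨κ ((a + b) / 2), fun s hs => ?_⟩
  have hfd : ∀ x ∈ I, fderivWithin ℝ κ I x = 0 := by
    intro x hx
    have h0 : HasDerivAt κ 0 x := by
      have := (hdκ x hx).hasDerivAt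
      rwa [hderiv0 x hx] at this
    have hf : HasFDerivAt κ (0 : ℝ →L[ℝ] ℝ) x := by
      convert h0.hasFDerivAt using 1
      ext
      simp
      ext; simp
    exact (hf.hasFDerivWithinAt).fderivWithin (hIo.uniqueDiffWithinAt hx)
  exact hconv.is_const_of_fderivWithin_eq_zero (hκ.differentiableOn (by simp)) hfd hs hmid
end

section
/- Let κ₀, τ₀, ρ be real numbers with κ₀ ≠ 0 such that (κ₀² + τ₀²)² = (2κ₀² + τ₀²)·ρ. Then ρ > 0, ρ ≥ τ₀², and either κ₀² = (ρ − τ₀²) + √(ρ(ρ − τ₀²)) or κ₀² = (ρ − τ₀²) − √(ρ(ρ − τ₀²)). In particular, if τ₀ = 0 then κ₀² = 2ρ. -/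
/-! With `x = κ₀²` and `t = τ₀²` the condition is a quadratic in `x`, and completing the square
turns it into `(x + t - ρ)² = ρ (ρ - t)`. Since `x > 0` the left side of the original equation
is positive, which forces `ρ > 0`; then the square identity forces `ρ ≥ t` and gives the two
roots `x = (ρ - t) ± √(ρ (ρ - t))`. -/

namespace TriharmonicHelix

variable {x t ρ : ℝ}

lemma sq_add_sub_eq (h : (x + t) ^ 2 = (2 * x + t) * ρ) : (x + t - ρ) ^ 2 = ρ * (ρ - t) := by
  linear_combination h

lemma rho_pos (hx : 0 < x) (ht : 0 ≤ t) (h : (x + t) ^ 2 = (2 * x + t) * ρ) : 0 < ρ :=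
  pos_of_mul_pos_right (h ▸ (by positivity : 0 < (x + t) ^ 2)) (by positivity)

lemma le_rho (hx : 0 < x) (ht : 0 ≤ t) (h : (x + t) ^ 2 = (2 * x + t) * ρ) : t ≤ ρ := by
  have hρ := rho_pos hx ht h
  have : 0 ≤ ρ * (ρ - t) := sq_add_sub_eq h ▸ sq_nonneg _
  linarith [nonneg_of_mul_nonneg_right this hρ]

lemma eq_add_sqrt_or_eq_sub_sqrt (h : (x + t) ^ 2 = (2 * x + t) * ρ) :
    x = (ρ - t) + √(ρ * (ρ - t)) ∨ x = (ρ - t) - √(ρ * (ρ - t)) := by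
  have hsq := sq_add_sub_eq h
  have hsqrt : (x + t - ρ) ^ 2 = √(ρ * (ρ - t)) ^ 2 := by
    rw [Real.sq_sqrt (hsq ▸ sq_nonneg _), hsq]
  rcases sq_eq_sq_iff_eq_or_eq_neg.mp hsqrt with hroot | hroot
  · exact .inl (by linarith)
  · exact .inr (by linarith)

lemma eq_two_mul_of_sq_eq (hx : x ≠ 0) (h : x ^ 2 = 2 * x * ρ) : x = 2 * ρ :=
  mul_left_cancel₀ hx (by linear_combination h)

end TriharmonicHelix

open TriharmonicHelix in
/-- The triharmonicity condition `(κ₀² + τ₀²)² = (2κ₀² + τ₀²)ρ` for a Frenet helix with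
`κ₀ ≠ 0` forces `ρ > 0`, `ρ ≥ τ₀²`, and the stated values of `κ₀²`; for `τ₀ = 0` one
gets `κ₀² = 2ρ`. -/
theorem stmt_11 (κ₀ τ₀ ρ : ℝ) (hκ₀ : κ₀ ≠ 0)
    (h : (κ₀ ^ 2 + τ₀ ^ 2) ^ 2 = (2 * κ₀ ^ 2 + τ₀ ^ 2) * ρ) :
    0 < ρ ∧ τ₀ ^ 2 ≤ ρ ∧
      (κ₀ ^ 2 = (ρ - τ₀ ^ 2) + Real.sqrt (ρ * (ρ - τ₀ ^ 2)) ∨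
       κ₀ ^ 2 = (ρ - τ₀ ^ 2) - Real.sqrt (ρ * (ρ - τ₀ ^ 2))) ∧
      (τ₀ = 0 → κ₀ ^ 2 = 2 * ρ) := by
  have hx : 0 < κ₀ ^ 2 := by positivity
  have ht : 0 ≤ τ₀ ^ 2 := sq_nonneg τ₀
  refine ⟨rho_pos hx ht h, le_rho hx ht h, eq_add_sqrt_or_eq_sub_sqrt h, ?_⟩
  rintro rfl
  exact eq_two_mul_of_sq_eq hx.ne' (by simpa using h)
end

section
/- There exists a smooth curve γ : (0,∞) → ℝ³ parametrized by arc length (i.e. ‖γ'(s)‖ = 1 for all s > 0) whose curvature κ(s) = ‖γ''(s)‖ equals √5/s and whose torsion τ(s) = det(γ'(s), γ''(s), γ'''(s))/κ(s)² equals 3√7/(2s), for all s > 0. -/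
open Real Set

noncomputable section Stmt12Aux

private def sA : ℝ := Real.sqrt (80/7221)
private def sW : ℝ := Real.sqrt 83 / 2
private def sB : ℝ := Real.sqrt (63/83)

private lemma sA_sq : sA ^ 2 = 80/7221 := Real.sq_sqrt (by norm_num)
private lemma sW_sq : sW ^ 2 = 83/4 := by
  rw [sW, div_pow, Real.sq_sqrt] <;> norm_num
private lemma sB_sq : sB ^ 2 = 63/83 := Real.sq_sqrt (by norm_num)

private def sθ (s : ℝ) : ℝ := sW * Real.log s

private def g0 (s : ℝ) : Fin 3 → ℝ :=
  ![sA * s * Real.cos (sθ s), sA * s * Real.sin (sθ s), sB * s]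
private def g1 (s : ℝ) : Fin 3 → ℝ :=
  ![sA * (Real.cos (sθ s) - sW * Real.sin (sθ s)),
    sA * (Real.sin (sθ s) + sW * Real.cos (sθ s)), sB]
private def g2 (s : ℝ) : Fin 3 → ℝ :=
  ![-(sA*sW) * (Real.sin (sθ s) + sW * Real.cos (sθ s)) / s,
    sA*sW * (Real.cos (sθ s) - sW * Real.sin (sθ s)) / s, 0]
private def g3 (s : ℝ) : Fin 3 → ℝ :=
  ![sA*sW*(1+sW^2) * Real.sin (sθ s) / s^2,
    -(sA*sW*(1+sW^2)) * Real.cos (sθ s) / s^2, 0]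

private lemma hθd {s : ℝ} (hs : 0 < s) : HasDerivAt sθ (sW * s⁻¹) s :=
  (Real.hasDerivAt_log hs.ne').const_mul sW

private lemma hcosd {s : ℝ} (hs : 0 < s) :
    HasDerivAt (fun t => Real.cos (sθ t)) (-Real.sin (sθ s) * (sW * s⁻¹)) s :=
  (Real.hasDerivAt_cos (sθ s)).comp s (hθd hs)

private lemma hsind {s : ℝ} (hs : 0 < s) :
    HasDerivAt (fun t => Real.sin (sθ t)) (Real.cos (sθ s) * (sW * s⁻¹)) s :=
  (Real.hasDerivAt_sin (sθ s)).comp s (hθd hs)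

private lemma hg0 {s : ℝ} (hs : 0 < s) : HasDerivAt g0 (g1 s) s := by
  rw [hasDerivAt_pi]
  intro i
  fin_cases i
  · have h := ((hasDerivAt_id s).const_mul sA).mul (hcosd hs)
    simp only [g0, g1, Matrix.cons_val_zero]
    refine h.congr_deriv ?_
    simp only [Fin.zero_eta, Matrix.cons_val_zero, id]
    field_simp
    ring
  · have h := ((hasDerivAt_id s).const_mul sA).mul (hsind hs)
    simp only [g0, g1, Matrix.cons_val_one, Matrix.head_cons]
    refine h.congr_deriv ?_
    simp only [Fin.mk_one, Matrix.cons_val_one, Matrix.cons_val_zero, id]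
    field_simp
  · have h := (hasDerivAt_id s).const_mul sB
    simp only [g0, g1, Matrix.cons_val_two, Matrix.tail_cons, Matrix.head_cons]
    refine h.congr_deriv ?_
    simp

private lemma hg1 {s : ℝ} (hs : 0 < s) : HasDerivAt g1 (g2 s) s := by
  rw [hasDerivAt_pi]
  intro i
  fin_cases i
  · have h := ((hcosd hs).sub ((hsind hs).const_mul sW)).const_mul sA
    simp only [g1, g2, Matrix.cons_val_zero]
    refine h.congr_deriv ?_
    simp only [Fin.zero_eta, Matrix.cons_val_zero, id]
    field_simp
    ring
  · have h := ((hsind hs).add ((hcosd hs).const_mul sW)).const_mul sA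
    simp only [g1, g2, Matrix.cons_val_one, Matrix.head_cons]
    refine h.congr_deriv ?_
    simp only [Fin.mk_one, Matrix.cons_val_one, Matrix.cons_val_zero, id]
    field_simp
    ring
  · simpa [g1, g2] using hasDerivAt_const s sB

private lemma hg2 {s : ℝ} (hs : 0 < s) : HasDerivAt g2 (g3 s) s := by
  rw [hasDerivAt_pi]
  intro i
  fin_cases i
  · have h := ((((hsind hs).add ((hcosd hs).const_mul sW)).const_mul (-(sA*sW))).div
      (hasDerivAt_id s) hs.ne')
    simp only [id_eq] at h
    simp only [g2, g3, Matrix.cons_val_zero]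
    refine h.congr_deriv ?_
    simp only [Fin.zero_eta, Matrix.cons_val_zero, id, Pi.add_apply]
    field_simp
    ring
  · have h := ((((hcosd hs).sub ((hsind hs).const_mul sW)).const_mul (sA*sW)).div
      (hasDerivAt_id s) hs.ne')
    simp only [id_eq] at h
    simp only [g2, g3, Matrix.cons_val_one, Matrix.head_cons]
    refine h.congr_deriv ?_
    simp only [Fin.mk_one, Matrix.cons_val_one, Matrix.cons_val_zero, id, Pi.sub_apply]
    field_simp
    ring
  · simpa [g2, g3] using hasDerivAt_const s (0:ℝ)

/-- Second and third derivatives of `g0` in the plain pi-type sense. -/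
private lemma pd1 {s : ℝ} (hs : 0 < s) : deriv g0 s = g1 s := (hg0 hs).deriv

private lemma pev1 {s : ℝ} (hs : 0 < s) : deriv g0 =ᶠ[nhds s] g1 :=
  Filter.eventuallyEq_of_mem (Ioi_mem_nhds hs) fun t ht => pd1 ht

private lemma pd2 {s : ℝ} (hs : 0 < s) : iteratedDeriv 2 g0 s = g2 s := by
  have h2 : iteratedDeriv 2 g0 s = deriv (deriv g0) s := by
    show iteratedDeriv (1+1) g0 s = _
    rw [iteratedDeriv_succ, iteratedDeriv_one]
  rw [h2, (pev1 hs).deriv_eq]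
  exact (hg1 hs).deriv

private lemma pev2 {s : ℝ} (hs : 0 < s) : iteratedDeriv 2 g0 =ᶠ[nhds s] g2 :=
  Filter.eventuallyEq_of_mem (Ioi_mem_nhds hs) fun t ht => pd2 ht

private lemma pd3 {s : ℝ} (hs : 0 < s) : iteratedDeriv 3 g0 s = g3 s := by
  have h3 : iteratedDeriv 3 g0 s = deriv (iteratedDeriv 2 g0) s := by
    show iteratedDeriv (2+1) g0 s = _
    rw [iteratedDeriv_succ]
  rw [h3, (pev2 hs).deriv_eq]
  exact (hg2 hs).deriv

/-- The curve, valued in Euclidean space. -/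
private def eE := (EuclideanSpace.equiv (Fin 3) ℝ).symm

private def γ0 : ℝ → EuclideanSpace ℝ (Fin 3) := fun s => eE (g0 s)

private lemma hd1 {s : ℝ} (hs : 0 < s) : HasDerivAt γ0 (eE (g1 s)) s :=
  eE.toContinuousLinearMap.hasFDerivAt.comp_hasDerivAt s (hg0 hs)

private lemma hd2 {s : ℝ} (hs : 0 < s) :
    HasDerivAt (fun t => eE (g1 t)) (eE (g2 s)) s :=
  eE.toContinuousLinearMap.hasFDerivAt.comp_hasDerivAt s (hg1 hs)

private lemma hd3 {s : ℝ} (hs : 0 < s) :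
    HasDerivAt (fun t => eE (g2 t)) (eE (g3 s)) s :=
  eE.toContinuousLinearMap.hasFDerivAt.comp_hasDerivAt s (hg2 hs)

private lemma deriv1 {s : ℝ} (hs : 0 < s) : deriv γ0 s = eE (g1 s) := (hd1 hs).deriv

private lemma ev1 {s : ℝ} (hs : 0 < s) :
    deriv γ0 =ᶠ[nhds s] fun t => eE (g1 t) :=
  Filter.eventuallyEq_of_mem (Ioi_mem_nhds hs) fun t ht => deriv1 ht

private lemma deriv2 {s : ℝ} (hs : 0 < s) : iteratedDeriv 2 γ0 s = eE (g2 s) := by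
  have h2 : iteratedDeriv 2 γ0 s = deriv (deriv γ0) s := by
    show iteratedDeriv (1+1) γ0 s = _
    rw [iteratedDeriv_succ, iteratedDeriv_one]
  rw [h2, (ev1 hs).deriv_eq]
  exact (hd2 hs).deriv

end Stmt12Aux

/-- There exists an arc-length parametrized smooth curve in `ℝ³` with curvature
`κ(s) = √5/s` and torsion `τ(s) = det(γ', γ'', γ''')/κ² = 3√7/(2s)` on `(0,∞)`. -/
theorem stmt_12 :
    ∃ γ : ℝ → EuclideanSpace ℝ (Fin 3),
      ContDiffOn ℝ (⊤ : ℕ∞) γ (Set.Ioi 0) ∧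
      ∀ s ∈ Set.Ioi (0 : ℝ),
        ‖deriv γ s‖ = 1 ∧
        ‖iteratedDeriv 2 γ s‖ = Real.sqrt 5 / s ∧
        Matrix.det (Matrix.of
            ![((deriv γ s : EuclideanSpace ℝ (Fin 3)) : Fin 3 → ℝ),
              ((iteratedDeriv 2 γ s : EuclideanSpace ℝ (Fin 3)) : Fin 3 → ℝ),
              ((iteratedDeriv 3 γ s : EuclideanSpace ℝ (Fin 3)) : Fin 3 → ℝ)])
          / ‖iteratedDeriv 2 γ s‖ ^ 2 = 3 * Real.sqrt 7 / (2 * s) := by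
  refine ⟨γ0, ?_, ?_⟩
  · -- smoothness
    rw [contDiffOn_euclidean]
    intro i
    have hlog : ContDiffOn ℝ (⊤ : ℕ∞) Real.log (Set.Ioi 0) :=
      Real.contDiffOn_log.mono fun x hx => ne_of_gt hx
    have hθ' : ContDiffOn ℝ (⊤ : ℕ∞) sθ (Set.Ioi 0) := contDiffOn_const.mul hlog
    have hc : ContDiffOn ℝ (⊤ : ℕ∞) (fun t => Real.cos (sθ t)) (Set.Ioi 0) :=
      Real.contDiff_cos.comp_contDiffOn hθ'
    have hs : ContDiffOn ℝ (⊤ : ℕ∞) (fun t => Real.sin (sθ t)) (Set.Ioi 0) :=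
      Real.contDiff_sin.comp_contDiffOn hθ'
    have hι : ∀ x : ℝ, ∀ i, (γ0 x : Fin 3 → ℝ) i = g0 x i := fun x i => rfl
    simp only [hι]
    fin_cases i <;>
      simp only [g0, Matrix.cons_val_zero, Matrix.cons_val_one, Matrix.head_cons,
        Matrix.cons_val_two, Matrix.tail_cons]
    · exact (contDiffOn_const.mul contDiffOn_id).mul hc
    · exact (contDiffOn_const.mul contDiffOn_id).mul hs
    · exact contDiffOn_const.mul contDiffOn_id
  · intro s hs
    rw [Set.mem_Ioi] at hs
    have hcs : Real.cos (sθ s) ^ 2 + Real.sin (sθ s) ^ 2 = 1 := Real.cos_sq_add_sin_sq _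
    have happ : ∀ v : Fin 3 → ℝ, ∀ i, (eE v) i = v i := fun v i => rfl
    have hnorm2 : ‖iteratedDeriv 2 γ0 s‖ = Real.sqrt 5 / s := by
      rw [deriv2 hs, EuclideanSpace.norm_eq]
      have hsum : ∑ i, ‖(eE (g2 s)) i‖ ^ 2 = 5 / s ^ 2 := by
        rw [Fin.sum_univ_three]
        simp only [happ, g2, Matrix.cons_val_zero, Matrix.cons_val_one, Matrix.head_cons,
          Matrix.cons_val_two, Matrix.tail_cons, Real.norm_eq_abs, sq_abs]
        have key : (-(sA*sW) * (Real.sin (sθ s) + sW * Real.cos (sθ s)) / s) ^ 2 +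
            (sA*sW * (Real.cos (sθ s) - sW * Real.sin (sθ s)) / s) ^ 2 + (0:ℝ) ^ 2 =
            sA^2 * sW^2 * (1 + sW^2) * (Real.cos (sθ s)^2 + Real.sin (sθ s)^2) / s^2 := by
          field_simp
          ring
        rw [key, hcs, sA_sq, sW_sq]
        norm_num
      rw [hsum, show (5:ℝ)/s^2 = (Real.sqrt 5 / s)^2 by
          rw [div_pow, Real.sq_sqrt (by norm_num)],
        Real.sqrt_sq (by positivity)]
    refine ⟨?_, hnorm2, ?_⟩
    · rw [deriv1 hs, EuclideanSpace.norm_eq]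
      have hsum : ∑ i, ‖(eE (g1 s)) i‖ ^ 2 = 1 := by
        rw [Fin.sum_univ_three]
        simp only [happ, g1, Matrix.cons_val_zero, Matrix.cons_val_one, Matrix.head_cons,
          Matrix.cons_val_two, Matrix.tail_cons, Real.norm_eq_abs, sq_abs]
        have key : (sA * (Real.cos (sθ s) - sW * Real.sin (sθ s))) ^ 2 +
            (sA * (Real.sin (sθ s) + sW * Real.cos (sθ s))) ^ 2 + sB ^ 2 =
            sA^2 * (1 + sW^2) * (Real.cos (sθ s)^2 + Real.sin (sθ s)^2) + sB^2 := by ring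
        rw [key, hcs, sA_sq, sW_sq, sB_sq]
        norm_num
      rw [hsum, Real.sqrt_one]
    · have pe1 : ((deriv γ0 s : EuclideanSpace ℝ (Fin 3)) : Fin 3 → ℝ) = g1 s := by rw [deriv1 hs]; rfl
      have pe2 : ((iteratedDeriv 2 γ0 s : EuclideanSpace ℝ (Fin 3)) : Fin 3 → ℝ) = g2 s := by rw [deriv2 hs]; rfl
      have pe3 : ((iteratedDeriv 3 γ0 s : EuclideanSpace ℝ (Fin 3)) : Fin 3 → ℝ) = g3 s := by
          have h3 : iteratedDeriv 3 γ0 s = deriv (iteratedDeriv 2 γ0) s := by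
            show iteratedDeriv (2+1) γ0 s = _
            rw [iteratedDeriv_succ]
          have ev2 : iteratedDeriv 2 γ0 =ᶠ[nhds s] fun t => eE (g2 t) :=
            Filter.eventuallyEq_of_mem (Ioi_mem_nhds hs) fun t ht => deriv2 ht
          rw [h3, ev2.deriv_eq, (hd3 hs).deriv]; rfl
      rw [pe1, pe2, pe3, hnorm2]
      have hA5 : sA^2 * sW^2 * (1 + sW^2) = 5 := by
        rw [sA_sq, sW_sq]; norm_num
      have hBW : sB * sW = 3 * Real.sqrt 7 / 2 := by
        have h1 : Real.sqrt (63/83) * Real.sqrt 83 = Real.sqrt 63 := by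
          rw [← Real.sqrt_mul (by norm_num)]; norm_num
        have h63 : Real.sqrt 63 = 3 * Real.sqrt 7 := by
          rw [show (63:ℝ) = 3^2*7 by norm_num, Real.sqrt_mul (by positivity),
            Real.sqrt_sq (by norm_num)]
        rw [sB, sW, show Real.sqrt (63/83) * (Real.sqrt 83 / 2) =
          Real.sqrt (63/83) * Real.sqrt 83 / 2 by ring, h1, h63]
      have hdet : Matrix.det (Matrix.of ![g1 s, g2 s, g3 s]) =
          sB * (sA^2 * sW^2 * (1 + sW^2)) * sW *
            (Real.cos (sθ s)^2 + Real.sin (sθ s)^2) / s^3 := by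
        rw [Matrix.det_fin_three]
        simp only [Matrix.of_apply, g1, g2, g3, Matrix.cons_val', Matrix.cons_val_zero,
          Matrix.cons_val_one, Matrix.head_cons, Matrix.cons_val_two, Matrix.tail_cons,
          Matrix.empty_val', Matrix.cons_val_fin_one, Matrix.head_fin_const]
        field_simp
        ring
      rw [hdet, hcs, hA5]
      rw [div_pow, Real.sq_sqrt (by norm_num : (0:ℝ) ≤ 5)]
      have hfin : sB * 5 * sW * 1 / s^3 / (5 / s^2) = sB * sW / s := by
        field_simp
      rw [hfin, hBW, div_div]
end

section
/- Let b, ζ, α₀, λ ∈ ℝ with ζ + b·cos(α₀) ≠ 0, and set β(s) = (ζ + b cos α₀)s + λ. Define x, y, z : ℝ → ℝ by x(s) = (sin α₀/(ζ + b cos α₀))·(sin β(s) − sin λ), y(s) = (−sin α₀/(ζ + b cos α₀))·(cos β(s) − cos λ), and z(s) = ((2ζ + b cos α₀)cos α₀ + b)/(2(ζ + b cos α₀))·s + (b sin²α₀/(2(ζ + b cos α₀)²))·(sin λ · cos β(s) − cos λ · sin β(s)). Then x(0) = y(0) = z(0) = 0 and for all s ∈ ℝ: x'(s) = sin α₀ ·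 cos β(s), y'(s) = sin α₀ · sin β(s), and z'(s) = cos α₀ + (b/2)·sin α₀·(x(s)·sin β(s) − y(s)·cos β(s)). -/
/-!
Along the phase `β s = c s + λ` with `c = ζ + b cos α₀ ≠ 0`, the formulas for `x` and `y` are
antiderivatives of `sin α₀ cos β` and `sin α₀ sin β`, and the oscillating part of `z` equals
`-(b sin² α₀ / 2c²) sin (β - λ)`. The right-hand side of the `z`-equation only depends on
`x sin β - y cos β = (sin α₀ / c) (1 - cos (β - λ))`, and the slope of `z` is chosen so that
the constant terms match, using `sin² α₀ + cos² α₀ = 1`.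
-/

open Real

namespace HeisenbergHelix

variable {β : ℝ → ℝ} {c s : ℝ}

theorem hasDerivAt_div_mul_sin_sub (hc : c ≠ 0) (hβ : HasDerivAt β c s) (a d : ℝ) :
    HasDerivAt (fun s => a / c * (sin (β s) - d)) (a * cos (β s)) s := by
  refine ((hβ.sin.sub_const d).const_mul (a / c)).congr_deriv ?_
  field_simp

theorem hasDerivAt_neg_div_mul_cos_sub (hc : c ≠ 0) (hβ : HasDerivAt β c s) (a d : ℝ) :
    HasDerivAt (fun s => -a / c * (cos (β s) - d)) (a * sin (β s)) s := by
  refine ((hβ.cos.sub_const d).const_mul (-a / c)).congr_deriv ?_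
  field_simp

theorem hasDerivAt_linear_add_mul_sin_sub_sin (hβ : HasDerivAt β c s) (p q l : ℝ) :
    HasDerivAt (fun s => p * s + q * (sin l * cos (β s) - cos l * sin (β s)))
      (p - q * c * cos (β s - l)) s := by
  have hphase : HasDerivAt (fun s => p * s - q * sin (β s - l)) (p - q * c * cos (β s - l)) s := by
    refine (((hasDerivAt_id s).const_mul p).sub
      ((hβ.sub_const l).sin.const_mul q)).congr_deriv ?_
    ring
  convert hphase using 2 with s
  rw [sin_sub]; ring

theorem div_mul_sin_sub_mul_sin_sub_neg_div_mul_cos_sub_mul_cos (a c θ l : ℝ) :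
    a / c * (sin θ - sin l) * sin θ - -a / c * (cos θ - cos l) * cos θ
      = a / c * (1 - cos (θ - l)) := by
  rw [cos_sub, ← sin_sq_add_cos_sq θ]; ring

end HeisenbergHelix

open HeisenbergHelix in
/-- The explicit parametrization of triharmonic helices in the Heisenberg group starts
at the origin and solves the Frenet ODE system `x' = sin α₀ cos β`, `y' = sin α₀ sin β`,
`z' = cos α₀ + (b/2) sin α₀ (x sin β − y cos β)`. -/
theorem stmt_14 (b ζ α₀ lam : ℝ) (h : ζ + b * Real.cos α₀ ≠ 0)
    (β x y z : ℝ → ℝ)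
    (hβ : ∀ s, β s = (ζ + b * Real.cos α₀) * s + lam)
    (hx : ∀ s, x s = Real.sin α₀ / (ζ + b * Real.cos α₀) * (Real.sin (β s) - Real.sin lam))
    (hy : ∀ s, y s = -Real.sin α₀ / (ζ + b * Real.cos α₀) * (Real.cos (β s) - Real.cos lam))
    (hz : ∀ s, z s =
      ((2 * ζ + b * Real.cos α₀) * Real.cos α₀ + b) / (2 * (ζ + b * Real.cos α₀)) * s
        + b * Real.sin α₀ ^ 2 / (2 * (ζ + b * Real.cos α₀) ^ 2)
          * (Real.sin lam * Real.cos (β s) - Real.cos lam * Real.sin (β s))) :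
    x 0 = 0 ∧ y 0 = 0 ∧ z 0 = 0 ∧
    ∀ s : ℝ,
      deriv x s = Real.sin α₀ * Real.cos (β s) ∧
      deriv y s = Real.sin α₀ * Real.sin (β s) ∧
      deriv z s = Real.cos α₀
        + b / 2 * Real.sin α₀ * (x s * Real.sin (β s) - y s * Real.cos (β s)) := by
  set c := ζ + b * cos α₀ with hc
  have hβ₀ : β 0 = lam := by simp [hβ]
  have hβ' (s : ℝ) : HasDerivAt β c s := by
    rw [show β = fun s => c * s + lam from funext hβ]
    simpa using ((hasDerivAt_id s).const_mul c).add_const lam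
  rw [show x = _ from funext hx, show y = _ from funext hy, show z = _ from funext hz]
  refine ⟨by simp [hβ₀], by simp [hβ₀], by simp [hβ₀, mul_comm], fun s => ⟨?_, ?_, ?_⟩⟩
  · exact (hasDerivAt_div_mul_sin_sub h (hβ' s) _ _).deriv
  · exact (hasDerivAt_neg_div_mul_cos_sub h (hβ' s) _ _).deriv
  · rw [(hasDerivAt_linear_add_mul_sin_sub_sin (hβ' s) _ _ _).deriv,
      div_mul_sin_sub_mul_sin_sub_neg_div_mul_cos_sub_mul_cos]
    field_simp
    linear_combination (-b) * sin_sq_add_cos_sq α₀ - 2 * cos α₀ * hc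
end

section
/- Let a, b, ζ, α₀, β₀ ∈ ℝ with a ≠ 0, sin α₀ ≠ 0 and cos β₀ ≠ 0, and set c₁ = (ζ + b cos α₀)/(2a sin α₀ cos β₀). Let I ⊂ ℝ be an open interval and x : I → ℝ a differentiable function with x'(s) = (1 + a[x²(s) + (x(s)·tan β₀ + c₁)²])·sin α₀·cos β₀ for all s ∈ I; set y(s) = x(s)·tan β₀ + c₁ and let z : I → ℝ satisfy z'(s) = ((4a − b²)cos α₀ − bζ)/(4a). Then, writing λ(s) = 1 + a(x²(s) + y²(s)) and assuming λ(s) > 0 on I, for every s ∈ I: ((x'(s))² + (y'(s))²)/λ(s)² + (z'(s) + (b/2)·(y(s)·x'(s) − x(s)·y'(s))/λ(s))² = 1. -/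
/-!
Along the curve, `x' = λ sin α₀ cos β₀` and `y' = x' tan β₀ = λ sin α₀ sin β₀`, so the horizontal
part of the velocity has squared length `sin² α₀`. Since the curve lies over the line
`y = x tan β₀ + c₁`, the twist `y x' - x y'` equals `c₁ x'`, and `c₁` is chosen exactly so that the
vertical component `z' + (b/2)(y x' - x y')/λ` equals `cos α₀`. Hence the squared speed is
`sin² α₀ + cos² α₀ = 1`.
-/

open Real

lemma horizontal_speed_sq {L α β : ℝ} (hL : L ≠ 0) (hcos : cos β ≠ 0) :
    ((L * sin α * cos β) ^ 2 + (L * sin α * cos β * tan β) ^ 2) / L ^ 2 = sin α ^ 2 := by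
  have hcos_tan : cos β * tan β = sin β := by rw [mul_comm, tan_mul_cos hcos]
  calc ((L * sin α * cos β) ^ 2 + (L * sin α * cos β * tan β) ^ 2) / L ^ 2
      = L ^ 2 * sin α ^ 2 * (sin β ^ 2 + cos β ^ 2) / L ^ 2 := by
        rw [mul_assoc (L * sin α), hcos_tan]; ring
    _ = sin α ^ 2 := by rw [sin_sq_add_cos_sq]; field_simp

lemma vertical_speed {L a b ζ α β x c₁ : ℝ} (hL : L ≠ 0) (ha : a ≠ 0) (hsin : sin α ≠ 0)
    (hcos : cos β ≠ 0) (hc₁ : c₁ = (ζ + b * cos α) / (2 * a * sin α * cos β)) :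
    ((4 * a - b ^ 2) * cos α - b * ζ) / (4 * a)
      + b / 2 * ((x * tan β + c₁) * (L * sin α * cos β) - x * (L * sin α * cos β * tan β)) / L
      = cos α := by
  have twist : (x * tan β + c₁) * (L * sin α * cos β) - x * (L * sin α * cos β * tan β)
      = c₁ * sin α * cos β * L := by ring
  rw [twist, hc₁]
  field_simp
  ring

/-- The type (ii) curve `s ↦ (x(s), x(s)·tan β₀ + c₁, z(s))` in the BCV space `M(a,b)`
is parametrized by arc length with respect to the metric `g_{a,b}`. -/
theorem stmt_17 (a b ζ α₀ β₀ : ℝ) (ha : a ≠ 0) (hsin : Real.sin α₀ ≠ 0)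
    (hcos : Real.cos β₀ ≠ 0)
    (c₁ : ℝ) (hc₁ : c₁ = (ζ + b * Real.cos α₀) / (2 * a * Real.sin α₀ * Real.cos β₀))
    (p q : ℝ) (x y z : ℝ → ℝ)
    (hyx : ∀ s, y s = x s * Real.tan β₀ + c₁)
    (hx : ∀ s ∈ Set.Ioo p q,
      HasDerivAt x
        ((1 + a * ((x s) ^ 2 + (x s * Real.tan β₀ + c₁) ^ 2))
          * Real.sin α₀ * Real.cos β₀) s)
    (hz : ∀ s ∈ Set.Ioo p q,
      HasDerivAt z (((4 * a - b ^ 2) * Real.cos α₀ - b * ζ) / (4 * a)) s)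
    (hpos : ∀ s ∈ Set.Ioo p q, 0 < 1 + a * ((x s) ^ 2 + (y s) ^ 2)) :
    ∀ s ∈ Set.Ioo p q,
      ((deriv x s) ^ 2 + (deriv y s) ^ 2) / (1 + a * ((x s) ^ 2 + (y s) ^ 2)) ^ 2
        + (deriv z s
            + b / 2 * (y s * deriv x s - x s * deriv y s)
              / (1 + a * ((x s) ^ 2 + (y s) ^ 2))) ^ 2 = 1 := by
  intro s hs
  have hy : HasDerivAt y (deriv x s * tan β₀) s := by
    rw [funext hyx]
    exact ((hx s hs).differentiableAt.hasDerivAt.mul_const _).add_const c₁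
  have hL := hpos s hs
  rw [hyx s] at hL
  rw [hy.deriv, (hx s hs).deriv, (hz s hs).deriv, hyx s]
  rw [horizontal_speed_sq hL.ne' hcos, vertical_speed hL.ne' ha hsin hcos hc₁]
  exact sin_sq_add_cos_sq α₀
end
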